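/- Let G = (V,E) be a finite undirected multigraph, A, B ⊆ V², e ∈ E, and let φ be a fourientation of G \ e. Define f_φ(c) = 1 if φ ∪ c is (A,B)-valid and f_φ(c) = 0 otherwise, for c among the four configurations ↑e, →e, ←e, ↔e of e. Then f_φ(→e) + f_φ(←e) = f_φ(↑e) + f_φ(↔e). -/

import Mathlib

namespace SubgraphsVsOrientations

/-- The four possible configurations of an edge in a fourientation:
`zero` = 0-way, `forward`/`backward` = the two 1-way configurations (relative to
a reference direction of the edge), `two` = 2-way. -/
inductive Four : Type
  | zero | forward | backward | two
deriving DecidableEq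

instance : Fintype Four where
  elems := {Four.zero, Four.forward, Four.backward, Four.two}
  complete := fun x => by cases x <;> simp

variable {V E : Type*}

/-- Whether configuration `c` allows traversal of the edge in direction `b`
(`b = true` means from `src` to `tgt`). -/
def allows : Four → Bool → Prop
  | Four.zero, _ => False
  | Four.forward, b => b = true
  | Four.backward, b => b = false
  | Four.two, _ => True

/-- An edge configuration is solid if it is 0-way or 2-way. -/
def IsSolid (c : Four) : Prop := c = Four.zero ∨ c = Four.two

/-- A configuration is 1-way if it is `forward` or `backward`. -/
def IsOneWay (c : Four) : Prop := c = Four.forward ∨ c = Four.backward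

/-- Reversing a configuration: swaps the two 1-way configurations,
fixes 0-way and 2-way. -/
def flipFour : Four → Four
  | Four.forward => Four.backward
  | Four.backward => Four.forward
  | c => c

/-- The 1-way configuration corresponding to direction `b`. -/
def oneWayFour (b : Bool) : Four := if b then Four.forward else Four.backward

/-- Tail of the arc `(e, b)` (the edge `e` traversed in direction `b`). -/
def arcTail (src tgt : E → V) (a : E × Bool) : V := if a.2 then src a.1 else tgt a.1

/-- Head of the arc `(e, b)`. -/
def arcHead (src tgt : E → V) (a : E × Bool) : V := if a.2 then tgt a.1 else src a.1

/-- One-step relation of the digraph `G⃗(A,B;φ)`: there is an arc from `x` to `y`, either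
a traversable directed edge of the fourientation `φ`, or an extra arc from `A ∪ B`. -/
def arcStep (src tgt : E → V) (A B : Set (V × V)) (φ : E → Four) (x y : V) : Prop :=
  (∃ a : E × Bool, allows (φ a.1) a.2 ∧ arcTail src tgt a = x ∧ arcHead src tgt a = y)
    ∨ (x, y) ∈ A ∪ B

/-- Reachability by a directed path in the digraph `G⃗(A,B;φ)`. -/
def reach (src tgt : E → V) (A B : Set (V × V)) (φ : E → Four) : V → V → Prop :=
  Relation.ReflTransGen (arcStep src tgt A B φ)

/-- A fourientation `φ` is `(A,B)`-valid: in `G⃗(A,B;φ)`, for every `(u,v) ∈ A` the vertex `v`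
cannot reach `u`, and for every `(u,v) ∈ B` the vertex `v` can reach `u`. -/
def IsValid (src tgt : E → V) (A B : Set (V × V)) (φ : E → Four) : Prop :=
  (∀ p ∈ A, ¬ reach src tgt A B φ p.2 p.1) ∧ (∀ p ∈ B, reach src tgt A B φ p.2 p.1)

/-- The set of solid edges of a fourientation. -/
def solidSet (φ : E → Four) : Set E := {e | IsSolid (φ e)}

/-- The fourientation associated to an orientation `σ : E → Bool` (every edge 1-way). -/
def toFour (σ : E → Bool) : E → Four := fun e => oneWayFour (σ e)

open Classical in
/-- The fourientation associated to a (spanning) subgraph `F ⊆ E`: edges of `F` are 2-way,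
the other edges are 0-way. -/
noncomputable def toFourSub (F : Set E) : E → Four :=
  fun e => if e ∈ F then Four.two else Four.zero

/-- The arc `(e,b)` is the arc of a 1-way edge of `φ`. -/
def oneWayArc (φ : E → Four) (a : E × Bool) : Prop := φ a.1 = oneWayFour a.2

/-- `Cyc(φ)`: the set of cyclic 1-way edges (arcs) of the fourientation `φ`, in the digraph
`G⃗(A,B;φ)`: the head of the arc can reach its tail. -/
def CycSet (src tgt : E → V) (A B : Set (V × V)) (φ : E → Four) : Set (E × Bool) :=
  {a | oneWayArc φ a ∧ reach src tgt A B φ (arcHead src tgt a) (arcTail src tgt a)}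

/-- `Acy(φ)`: the set of acyclic 1-way edges (arcs) of the fourientation `φ`. -/
def AcySet (src tgt : E → V) (A B : Set (V × V)) (φ : E → Four) : Set (E × Bool) :=
  {a | oneWayArc φ a ∧ ¬ reach src tgt A B φ (arcHead src tgt a) (arcTail src tgt a)}

/-- `l` is (the arc sequence of) a directed cycle: a nonempty closed chain of arcs
visiting no vertex twice. -/
def IsDirCycle (src tgt : E → V) (l : List (E × Bool)) : Prop :=
  ∃ h : l ≠ [],
    l.Chain' (fun a b => arcHead src tgt a = arcTail src tgt b) ∧
    arcHead src tgt (l.getLast h) = arcTail src tgt (l.head h) ∧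
    (l.map (arcTail src tgt)).Nodup

/-- Reversing the directed cycle `l` in the fourientation `φ`: all 1-way edges on the cycle are
reversed, other edges (in particular 2-way edges of the cycle) are unchanged. -/
def revCyc [DecidableEq E] (φ : E → Four) (l : List (E × Bool)) : E → Four :=
  fun e => if (e, true) ∈ l ∨ (e, false) ∈ l then flipFour (φ e) else φ e

/-- One cycle-reversal move: `ψ` is obtained from `φ` by reversing a directed cycle of `φ`. -/
def CycleStep (src tgt : E → V) [DecidableEq E] (φ ψ : E → Four) : Prop :=
  ∃ l, IsDirCycle src tgt l ∧ (∀ a ∈ l, allows (φ a.1) a.2) ∧ ψ = revCyc φ l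

/-- The edge `e` crosses the cut given by `V1` (in either direction). -/
def edgeCrosses (src tgt : E → V) (V1 : Set V) (e : E) : Prop :=
  (src e ∈ V1 ∧ tgt e ∉ V1) ∨ (tgt e ∈ V1 ∧ src e ∉ V1)

/-- The cut `V1 / V1ᶜ` defines a directed `(A,B)`-cocycle of `G⃗(A,B;φ)`: the set of arcs from
`V1` to `V1ᶜ` is nonempty, no arc of the digraph goes from `V1ᶜ` to `V1`, and no arc of
`A ∪ B` crosses the cut (in either direction). -/
def IsABCocycleCut (src tgt : E → V) (A B : Set (V × V)) (φ : E → Four) (V1 : Set V) : Prop :=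
  (∃ a : E × Bool, allows (φ a.1) a.2 ∧ arcTail src tgt a ∈ V1 ∧ arcHead src tgt a ∉ V1) ∧
  (∀ a : E × Bool, allows (φ a.1) a.2 → ¬ (arcTail src tgt a ∉ V1 ∧ arcHead src tgt a ∈ V1)) ∧
  (∀ p ∈ A ∪ B, ((p : V × V).1 ∈ V1 ↔ p.2 ∈ V1))

open Classical in
/-- Reversing the directed cocycle given by the cut `V1`: all 1-way edges crossing the cut are
reversed, other edges (in particular 0-way edges crossing the cut) are unchanged. -/
noncomputable def revCut (src tgt : E → V) (φ : E → Four) (V1 : Set V) : E → Four :=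
  fun e => if edgeCrosses src tgt V1 e then flipFour (φ e) else φ e

/-- One cocycle-reversal move: `ψ` is obtained from `φ` by reversing a directed
`(A,B)`-cocycle of `φ`. -/
def CocycleStep (src tgt : E → V) (A B : Set (V × V)) (φ ψ : E → Four) : Prop :=
  ∃ V1 : Set V, IsABCocycleCut src tgt A B φ V1 ∧ ψ = revCut src tgt φ V1

/-- One cycle- or cocycle-reversal move. -/
def CCStep (src tgt : E → V) (A B : Set (V × V)) [DecidableEq E] (φ ψ : E → Four) : Prop :=
  CycleStep src tgt φ ψ ∨ CocycleStep src tgt A B φ ψ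

/-- `φ` contains no cycle (of the graph `G`) made entirely of 2-way edges. -/
def NoTwoWayCycle (src tgt : E → V) (φ : E → Four) : Prop :=
  ¬ ∃ l : List (E × Bool), IsDirCycle src tgt l ∧ (l.map Prod.fst).Nodup ∧
      ∀ a ∈ l, φ a.1 = Four.two

/-- `φ` contains no `(A,B)`-cocycle (of the graph `G`) made entirely of 0-way edges:
there is no cut, not crossed by any arc of `A ∪ B`, crossed by at least one edge of `G`,
all of whose crossing edges are 0-way. -/
def NoZeroWayCocycle (src tgt : E → V) (A B : Set (V × V)) (φ : E → Four) : Prop :=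
  ¬ ∃ V1 : Set V, (∃ e, edgeCrosses src tgt V1 e) ∧
      (∀ e, edgeCrosses src tgt V1 e → φ e = Four.zero) ∧
      (∀ p ∈ A ∪ B, ((p : V × V).1 ∈ V1 ↔ p.2 ∈ V1))

/-- The subgraph `F` contains no cycle (it is a forest). -/
def NoCycleIn (src tgt : E → V) (F : Set E) : Prop :=
  ¬ ∃ l : List (E × Bool), IsDirCycle src tgt l ∧ (l.map Prod.fst).Nodup ∧ ∀ a ∈ l, a.1 ∈ F

/-- One undirected adjacency step in the graph `F ∪ A̲ ∪ B̲`. -/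
def usym (src tgt : E → V) (A B : Set (V × V)) (F : Set E) (x y : V) : Prop :=
  (∃ e ∈ F, (src e = x ∧ tgt e = y) ∨ (src e = y ∧ tgt e = x)) ∨
  (∃ p ∈ A ∪ B, ((p : V × V) = (x, y) ∨ p = (y, x)))

/-- Connectivity (by undirected paths) in the graph `F ∪ A̲ ∪ B̲`. -/
def ureach (src tgt : E → V) (A B : Set (V × V)) (F : Set E) : V → V → Prop :=
  Relation.ReflTransGen (usym src tgt A B F)

/-- The subgraph `F` is `(A,B)`-connected: the connected components of `F ∪ A̲ ∪ B̲`
coincide with those of `G ∪ A̲ ∪ B̲`. -/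
def ABConnected (src tgt : E → V) (A B : Set (V × V)) (F : Set E) : Prop :=
  ∀ x y, ureach src tgt A B F x y ↔ ureach src tgt A B Set.univ x y

/-!
Let `R` be reachability in `G⃗(A,B;φ ∪ ↑e)`. Giving `e` the direction `b` adds exactly the paths
`x ⇝ tail(e,b) → head(e,b) ⇝ y` with both legs in `R`. If one pair `(u,v) ∈ A ∪ B` has such a
path `v ⇝ u` through `(e,b)`, then through the arc `u → v` every path through the opposite arc
`(e,!b)` can be rerouted into `R`. So for one direction `b` the arc `(e,b)` changes no
reachability between the endpoints of pairs of `A ∪ B`: then `φ ∪ (e,b)` is valid iff `φ ∪ ↑e`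
is, and `φ ∪ ↔e` is valid iff `φ ∪ (e,!b)` is, which gives the identity.
-/

variable (src tgt : E → V) (A B : Set (V × V))

theorem arcHead_not (e : E) (b : Bool) : arcHead src tgt (e, !b) = arcTail src tgt (e, b) := by
  cases b <;> rfl

theorem arcTail_not (e : E) (b : Bool) : arcTail src tgt (e, !b) = arcHead src tgt (e, b) := by
  cases b <;> rfl

theorem allows_oneWayFour (b b' : Bool) : allows (oneWayFour b) b' ↔ b' = b := by
  cases b <;> cases b' <;> simp [allows, oneWayFour]

theorem reach_of_mem {φ : E → Four} {p : V × V} (hp : p ∈ A ∪ B) :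
    reach src tgt A B φ p.1 p.2 :=
  Relation.ReflTransGen.single (Or.inr hp)

theorem isValid_congr {φ ψ : E → Four}
    (h : ∀ p ∈ A ∪ B, reach src tgt A B φ p.2 p.1 ↔ reach src tgt A B ψ p.2 p.1) :
    IsValid src tgt A B φ ↔ IsValid src tgt A B ψ :=
  and_congr (forall₂_congr fun p hp => not_congr (h p (Or.inl hp)))
    (forall₂_congr fun p hp => h p (Or.inr hp))

def ReachVia (ψ : E → Four) (e : E) (b : Bool) (x y : V) : Prop :=
  reach src tgt A B ψ x (arcTail src tgt (e, b)) ∧ reach src tgt A B ψ (arcHead src tgt (e, b)) y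

theorem reach_of_reachVia_not {ψ : E → Four} {e : E} {b : Bool} {u v x y : V}
    (huv : ReachVia src tgt A B ψ e b u v) (hvu : reach src tgt A B ψ v u)
    (hxy : ReachVia src tgt A B ψ e (!b) x y) : reach src tgt A B ψ x y := by
  obtain ⟨hu, hv⟩ := huv
  obtain ⟨hx, hy⟩ := hxy
  rw [arcTail_not] at hx
  rw [arcHead_not] at hy
  exact hx.trans (hv.trans (hvu.trans (hu.trans hy)))

theorem exists_reachVia_imp_reach (ψ : E → Four) (e : E) :
    ∃ b, ∀ p ∈ A ∪ B, ReachVia src tgt A B ψ e b p.2 p.1 → reach src tgt A B ψ p.2 p.1 := by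
  by_cases h : ∃ p ∈ A ∪ B, ReachVia src tgt A B ψ e true p.2 p.1
  · obtain ⟨p, hp, hvia⟩ := h
    exact ⟨false, fun p' _ hvia' =>
      reach_of_reachVia_not src tgt A B hvia (reach_of_mem src tgt A B hp) hvia'⟩
  · exact ⟨true, fun p hp hvia => (h ⟨p, hp, hvia⟩).elim⟩

section Update

variable [DecidableEq E] (φ : E → Four) (e : E)

theorem arcStep_update_iff (c : Four) (x y : V) :
    arcStep src tgt A B (Function.update φ e c) x y ↔
      arcStep src tgt A B (Function.update φ e Four.zero) x y ∨
        ∃ b, allows c b ∧ arcTail src tgt (e, b) = x ∧ arcHead src tgt (e, b) = y := by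
  constructor
  · rintro (⟨⟨f, b⟩, hf, rfl, rfl⟩ | hAB)
    · by_cases hfe : f = e
      · subst hfe
        exact Or.inr ⟨b, by simpa using hf, rfl, rfl⟩
      · exact Or.inl (Or.inl ⟨(f, b), by simpa [hfe] using hf, rfl, rfl⟩)
    · exact Or.inl (Or.inr hAB)
  · rintro ((⟨⟨f, b⟩, hf, rfl, rfl⟩ | hAB) | ⟨b, hb, rfl, rfl⟩)
    · by_cases hfe : f = e
      · subst hfe
        simp [allows] at hf
      · exact Or.inl ⟨(f, b), by simpa [hfe] using hf, rfl, rfl⟩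
    · exact Or.inr hAB
    · exact Or.inl ⟨(e, b), by simpa using hb, rfl, rfl⟩

theorem reach_update_iff (c : Four) (x y : V) :
    reach src tgt A B (Function.update φ e c) x y ↔
      reach src tgt A B (Function.update φ e Four.zero) x y ∨
        ∃ b, allows c b ∧ ReachVia src tgt A B (Function.update φ e Four.zero) e b x y := by
  constructor
  · intro h
    induction h with
    | refl => exact Or.inl .refl
    | tail _ hstep ih =>
      rcases (arcStep_update_iff src tgt A B φ e c _ _).1 hstep with h0 | ⟨b', hb', rfl, rfl⟩
      · rcases ih with hxm | ⟨b, hb, hx, hm⟩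
        · exact Or.inl (hxm.tail h0)
        · exact Or.inr ⟨b, hb, hx, hm.tail h0⟩
      · rcases ih with hxm | ⟨b, hb, hx, -⟩
        · exact Or.inr ⟨b', hb', hxm, .refl⟩
        · -- a second use of `e` restarts the path at it, or returns to `arcTail (e, b)`
          obtain rfl | rfl := b'.eq_or_eq_not b
          · exact Or.inr ⟨b', hb, hx, .refl⟩
          · exact Or.inl (by rwa [arcHead_not])
  · have hmono : ∀ {u w}, reach src tgt A B (Function.update φ e Four.zero) u w →
        reach src tgt A B (Function.update φ e c) u w := fun h =>
      Relation.ReflTransGen.mono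
        (fun _ _ h => (arcStep_update_iff src tgt A B φ e c _ _).2 (Or.inl h)) _ _ h
    rintro (h | ⟨b, hb, hx, hy⟩)
    · exact hmono h
    · have harc : arcStep src tgt A B (Function.update φ e c)
          (arcTail src tgt (e, b)) (arcHead src tgt (e, b)) :=
        (arcStep_update_iff src tgt A B φ e c _ _).2 (Or.inr ⟨b, hb, rfl, rfl⟩)
      exact (hmono hx).trans ((Relation.ReflTransGen.single harc).trans (hmono hy))

theorem reach_update_oneWayFour_iff (b : Bool) (x y : V) :
    reach src tgt A B (Function.update φ e (oneWayFour b)) x y ↔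
      reach src tgt A B (Function.update φ e Four.zero) x y ∨
        ReachVia src tgt A B (Function.update φ e Four.zero) e b x y := by
  rw [reach_update_iff]
  simp only [allows_oneWayFour, exists_eq_left]

theorem reach_update_two_iff (b : Bool) (x y : V) :
    reach src tgt A B (Function.update φ e Four.two) x y ↔
      reach src tgt A B (Function.update φ e Four.zero) x y ∨
        ReachVia src tgt A B (Function.update φ e Four.zero) e b x y ∨
        ReachVia src tgt A B (Function.update φ e Four.zero) e (!b) x y := by
  rw [reach_update_iff]
  cases b <;> simp only [allows, true_and, Bool.exists_bool, Bool.not_false, Bool.not_true,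
    or_comm]

variable {A B φ e}

theorem isValid_update_oneWayFour_iff_zero {b : Bool}
    (hb : ∀ p ∈ A ∪ B, ReachVia src tgt A B (Function.update φ e Four.zero) e b p.2 p.1 →
      reach src tgt A B (Function.update φ e Four.zero) p.2 p.1) :
    IsValid src tgt A B (Function.update φ e (oneWayFour b)) ↔
      IsValid src tgt A B (Function.update φ e Four.zero) :=
  isValid_congr src tgt A B fun p hp => by
    rw [reach_update_oneWayFour_iff]
    exact or_iff_left_of_imp (hb p hp)

theorem isValid_update_two_iff_oneWayFour_not {b : Bool}
    (hb : ∀ p ∈ A ∪ B, ReachVia src tgt A B (Function.update φ e Four.zero) e b p.2 p.1 →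
      reach src tgt A B (Function.update φ e Four.zero) p.2 p.1) :
    IsValid src tgt A B (Function.update φ e Four.two) ↔
      IsValid src tgt A B (Function.update φ e (oneWayFour (!b))) :=
  isValid_congr src tgt A B fun p hp => by
    rw [reach_update_two_iff (b := b), reach_update_oneWayFour_iff]
    have := hb p hp
    tauto

end Update

open Classical in
theorem statement8_general {V E : Type*} [DecidableEq E] (src tgt : E → V)
    (A B : Set (V × V)) (e : E) (φ : E → Four) :
    ((if IsValid src tgt A B (Function.update φ e Four.forward) then 1 else 0 : ℕ) +
      (if IsValid src tgt A B (Function.update φ e Four.backward) then 1 else 0)) =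
    ((if IsValid src tgt A B (Function.update φ e Four.zero) then 1 else 0) +
      (if IsValid src tgt A B (Function.update φ e Four.two) then 1 else 0)) := by
  obtain ⟨b, hb⟩ := exists_reachVia_imp_reach src tgt A B (Function.update φ e Four.zero) e
  have hone := isValid_update_oneWayFour_iff_zero src tgt hb
  have htwo := isValid_update_two_iff_oneWayFour_not src tgt hb
  cases b
  · change IsValid src tgt A B (Function.update φ e Four.backward) ↔ _ at hone
    change _ ↔ IsValid src tgt A B (Function.update φ e Four.forward) at htwo
    rw [hone, htwo, add_comm]
  · change IsValid src tgt A B (Function.update φ e Four.forward) ↔ _ at hone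
    change _ ↔ IsValid src tgt A B (Function.update φ e Four.backward) at htwo
    rw [hone, htwo]

open Classical in
/-- Let `φ` be a fourientation of `G \ e`, and for a configuration `c` of `e`
let `f_φ(c) = 1` if `φ ∪ c` is `(A,B)`-valid and `0` otherwise. Then
`f_φ(→e) + f_φ(←e) = f_φ(↑e) + f_φ(↔e)`. -/
theorem statement8 {V E : Type*} [Fintype V] [Fintype E] [DecidableEq E] (src tgt : E → V)
    (A B : Set (V × V)) (e : E) (φ : E → Four) :
    ((if IsValid src tgt A B (Function.update φ e Four.forward) then 1 else 0 : ℕ) +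
      (if IsValid src tgt A B (Function.update φ e Four.backward) then 1 else 0)) =
    ((if IsValid src tgt A B (Function.update φ e Four.zero) then 1 else 0) +
      (if IsValid src tgt A B (Function.update φ e Four.two) then 1 else 0)) :=
  statement8_general src tgt A B e φ

end SubgraphsVsOrientations
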